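/- Let A be a C*-algebra, c ∈ A₊ and ε > 0, and let e ∈ C*(c)₊ satisfy e(c−ε)₊ = (c−ε)₊. Suppose b ∈ Mₙ(her((c−ε)₊)) is such that Σ_{i=1}^n b_{i,i} = Σ_{i=1}^n [x_i, y_i] with x_i, y_i ∈ her((c−ε)₊). Then b is the sum of two commutators in Mₙ(A). -/

import Mathlib

/-!
Everything in `her((c−ε)₊)` has `e` as a two-sided unit, so the problem becomes purely
algebraic. Put `fᵢ = bᵢᵢ − [xᵢ, yᵢ]`, so that `∑ fᵢ = 0`. With `N` the matrix carrying the `fᵢ`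
(`i ≠ i₀`) in column `i₀` and `P` the matrix carrying `e` in row `i₀` off the diagonal, the
diagonal of `[N, P]` is `(fᵢ)`, so `b − [N + diag x, P + diag y]` has zero diagonal, and its entries
still have `e` as a unit. A matrix `M`
with zero diagonal whose entries have `e` as a unit is the commutator
`[diag(λᵢ e), ((λᵢ − λⱼ)⁻¹ Mᵢⱼ)]` for any distinct scalars `λᵢ`.
-/

variable {A : Type*} [NonUnitalCStarAlgebra A] [PartialOrder A] [StarOrderedRing A]

/-- The hereditary subalgebra generated by `d`, i.e. the closure of `dAd`. -/
def her (d : A) : Set A := closure {x | ∃ y : A, x = d * y * d}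

open Matrix Function

section LocalUnit

variable {R : Type*} [NonUnitalRing R]

def localUnitSubring (e : R) : NonUnitalSubring R where
  carrier := {a | e * a = a ∧ a * e = a}
  add_mem' := by
    rintro a b ⟨ha, ha'⟩ ⟨hb, hb'⟩
    exact ⟨by rw [mul_add, ha, hb], by rw [add_mul, ha', hb']⟩
  zero_mem' := ⟨mul_zero e, zero_mul e⟩
  neg_mem' := by
    rintro a ⟨ha, ha'⟩
    exact ⟨by rw [mul_neg, ha], by rw [neg_mul, ha']⟩
  mul_mem' := by
    rintro a b ⟨ha, -⟩ ⟨-, hb'⟩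
    exact ⟨by rw [← mul_assoc, ha], by rw [mul_assoc, hb']⟩

theorem isClosed_localUnitSubring [TopologicalSpace R] [ContinuousMul R] [T2Space R] (e : R) :
    IsClosed (localUnitSubring e : Set R) :=
  (isClosed_eq (continuous_const.mul continuous_id) continuous_id).inter
    (isClosed_eq (continuous_id.mul continuous_const) continuous_id)

end LocalUnit

omit [PartialOrder A] [StarOrderedRing A] in
theorem her_subset_localUnitSubring {d e : A} (hd : IsSelfAdjoint d) (he : IsSelfAdjoint e)
    (hed : e * d = d) : her d ⊆ localUnitSubring e := by
  have hde : d * e = d := by simpa [hd.star_eq, he.star_eq] using congrArg star hed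
  refine closure_minimal ?_ (isClosed_localUnitSubring e)
  rintro _ ⟨y, rfl⟩
  exact ⟨by rw [← mul_assoc, ← mul_assoc, hed], by rw [mul_assoc, hde]⟩

namespace Matrix

variable {R : Type*} [NonUnitalRing R] {ι : Type*} {e : R}

theorem mul_apply_mem_localUnitSubring [Fintype ι] {Q P : Matrix ι ι R}
    (hQ : ∀ i j, Q i j ∈ localUnitSubring e) (hP : ∀ i j, P i j = 0 ∨ P i j = e) (i j : ι) :
    (Q * P) i j ∈ localUnitSubring e ∧ (P * Q) i j ∈ localUnitSubring e := by
  constructor <;> refine sum_mem fun k _ => ?_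
  · rcases hP k j with h | h <;> simp [h, (hQ i k).2, hQ]
  · rcases hP i k with h | h <;> simp [h, (hQ k j).1, hQ]

variable [DecidableEq ι]

def offDiagCol (i₀ : ι) (f : ι → R) : Matrix ι ι R :=
  of fun i j => if j = i₀ ∧ i ≠ i₀ then f i else 0

def offDiagRow (i₀ : ι) (a : R) : Matrix ι ι R :=
  of fun i j => if i = i₀ ∧ j ≠ i₀ then a else 0

@[simp]
theorem offDiagCol_apply_self (i₀ : ι) (f : ι → R) (i : ι) : offDiagCol i₀ f i i = 0 := by
  simp +contextual [offDiagCol]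

@[simp]
theorem offDiagRow_apply_self (i₀ : ι) (a : R) (i : ι) : offDiagRow i₀ a i i = 0 := by
  simp +contextual [offDiagRow]

theorem offDiagRow_apply_eq_zero_or_eq (i₀ : ι) (a : R) (i j : ι) :
    offDiagRow i₀ a i j = 0 ∨ offDiagRow i₀ a i j = a := by
  by_cases h : i = i₀ ∧ j ≠ i₀ <;> simp [offDiagRow, h]

variable [Fintype ι]

theorem offDiagCol_mul_offDiagRow_apply_self (i₀ : ι) (f : ι → R) (a : R) (i : ι) :
    (offDiagCol i₀ f * offDiagRow i₀ a) i i = if i = i₀ then 0 else f i * a := by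
  rw [mul_apply, Fintype.sum_eq_single i₀]
  · by_cases hi : i = i₀ <;> simp [offDiagCol, offDiagRow, hi]
  · intro j hj
    simp [offDiagCol, hj]

theorem offDiagRow_mul_offDiagCol_apply_self (i₀ : ι) (f : ι → R) (a : R) (i : ι) :
    (offDiagRow i₀ a * offDiagCol i₀ f) i i =
      if i = i₀ then ∑ j ∈ Finset.univ.erase i₀, a * f j else 0 := by
  rw [mul_apply]
  split_ifs with hi
  · subst hi
    rw [← Finset.add_sum_erase _ _ (Finset.mem_univ i)]
    simp only [offDiagRow_apply_self, zero_mul, zero_add]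
    exact Finset.sum_congr rfl fun j hj => by
      simp [offDiagRow, offDiagCol, Finset.ne_of_mem_erase hj]
  · simp [offDiagRow, hi]

theorem diag_commutator_offDiagCol_offDiagRow (i₀ : ι) {f : ι → R}
    (hf : ∀ i, f i ∈ localUnitSubring e) (hsum : ∑ i, f i = 0) (i : ι) :
    (offDiagCol i₀ f * offDiagRow i₀ e - offDiagRow i₀ e * offDiagCol i₀ f) i i = f i := by
  rw [sub_apply, offDiagCol_mul_offDiagRow_apply_self, offDiagRow_mul_offDiagCol_apply_self]
  split_ifs with hi
  · subst hi
    rw [← Finset.sum_erase_add _ _ (Finset.mem_univ i), add_eq_zero_iff_eq_neg] at hsum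
    simp [(hf _).1, hsum]
  · rw [(hf i).2, sub_zero]

theorem exists_diag_sub_commutator_eq_zero {b : Matrix ι ι R} {x y : ι → R}
    (hb : ∀ i j, b i j ∈ localUnitSubring e) (hx : ∀ i, x i ∈ localUnitSubring e)
    (hy : ∀ i, y i ∈ localUnitSubring e) (htrace : ∑ i, b i i = ∑ i, (x i * y i - y i * x i)) :
    ∃ X Y : Matrix ι ι R, (∀ i j, (b - (X * Y - Y * X)) i j ∈ localUnitSubring e) ∧
      ∀ i, (b - (X * Y - Y * X)) i i = 0 := by
  rcases isEmpty_or_nonempty ι with hι | ⟨⟨i₀⟩⟩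
  · exact ⟨0, 0, isEmptyElim, isEmptyElim⟩
  set S := localUnitSubring e
  set f : ι → R := fun i => b i i - (x i * y i - y i * x i)
  have hf (i : ι) : f i ∈ S :=
    sub_mem (hb i i) (sub_mem (mul_mem (hx i) (hy i)) (mul_mem (hy i) (hx i)))
  have hsum : ∑ i, f i = 0 := by simp [f, Finset.sum_sub_distrib, htrace]
  have hdiag_mem {z : ι → R} (hz : ∀ i, z i ∈ S) (i j : ι) : diagonal z i j ∈ S := by
    by_cases h : i = j <;> simp [h, hz, zero_mem]
  set Q := offDiagCol i₀ f + diagonal x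
  have hQ (i j : ι) : Q i j ∈ S := by
    refine add_mem ?_ (hdiag_mem hx i j)
    by_cases h : j = i₀ ∧ i ≠ i₀ <;> simp [offDiagCol, h, hf i, zero_mem]
  refine ⟨Q, offDiagRow i₀ e + diagonal y, fun i j => ?_, fun i => ?_⟩
  · have hQP := mul_apply_mem_localUnitSubring hQ (offDiagRow_apply_eq_zero_or_eq i₀ e) i j
    have hQY : (Q * diagonal y) i j ∈ S := sum_mem fun k _ => mul_mem (hQ i k) (hdiag_mem hy k j)
    have hYQ : (diagonal y * Q) i j ∈ S := sum_mem fun k _ => mul_mem (hdiag_mem hy i k) (hQ k j)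
    simp only [mul_add, add_mul, sub_apply, add_apply]
    exact sub_mem (hb i j) (sub_mem (add_mem hQP.1 hQY) (add_mem hQP.2 hYQ))
  · have key := diag_commutator_offDiagCol_offDiagRow i₀ hf hsum i
    simp only [Q, mul_add, add_mul, sub_apply, add_apply, mul_diagonal, diagonal_mul,
      offDiagCol_apply_self, offDiagRow_apply_self, diagonal_apply_eq, mul_zero, zero_mul,
      add_zero, zero_add] at key ⊢
    rw [sub_eq_zero, show b i i = f i + (x i * y i - y i * x i) by simp [f], ← key]
    abel

theorem exists_commutator_eq_of_diag_eq_zero (𝕜 : Type*) [Field 𝕜] [CharZero 𝕜] [Module 𝕜 R]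
    [IsScalarTower 𝕜 R R] [SMulCommClass 𝕜 R R] {M : Matrix ι ι R}
    (hM : ∀ i j, M i j ∈ localUnitSubring e) (hdiag : ∀ i, M i i = 0) :
    ∃ X Y : Matrix ι ι R, M = X * Y - Y * X := by
  set l : ι → 𝕜 := fun i => (Fintype.equivFin ι i : ℕ)
  have hl : Injective l :=
    (Nat.cast_injective.comp Fin.val_injective).comp (Fintype.equivFin ι).injective
  refine ⟨diagonal fun i => l i • e, of fun i j => (l i - l j)⁻¹ • M i j, ?_⟩
  ext i j
  obtain ⟨hleft, hright⟩ := hM i j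
  rcases eq_or_ne i j with rfl | hij
  · simp [hdiag]
  · have hne : l i - l j ≠ 0 := sub_ne_zero.mpr (hl.ne hij)
    simp only [sub_apply, diagonal_mul, mul_diagonal, of_apply, smul_mul_smul_comm, hleft, hright,
      ← sub_smul]
    rw [mul_comm _ (l j), ← sub_mul, mul_inv_cancel₀ hne, one_smul]

theorem exists_eq_add_commutators (𝕜 : Type*) [Field 𝕜] [CharZero 𝕜] [Module 𝕜 R]
    [IsScalarTower 𝕜 R R] [SMulCommClass 𝕜 R R] {b : Matrix ι ι R} {x y : ι → R}
    (hb : ∀ i j, b i j ∈ localUnitSubring e) (hx : ∀ i, x i ∈ localUnitSubring e)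
    (hy : ∀ i, y i ∈ localUnitSubring e) (htrace : ∑ i, b i i = ∑ i, (x i * y i - y i * x i)) :
    ∃ X₁ Y₁ X₂ Y₂ : Matrix ι ι R, b = (X₁ * Y₁ - Y₁ * X₁) + (X₂ * Y₂ - Y₂ * X₂) := by
  obtain ⟨X₁, Y₁, hmem, hdiag⟩ := exists_diag_sub_commutator_eq_zero hb hx hy htrace
  obtain ⟨X₂, Y₂, h⟩ := exists_commutator_eq_of_diag_eq_zero 𝕜 hmem hdiag
  exact ⟨X₁, Y₁, X₂, Y₂, by rw [← h]; abel⟩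

end Matrix

theorem matrix_sum_two_commutators_general
    (c : A) (ε : ℝ)
    (e : A)
    (he_pos : 0 ≤ e)
    (he : e * cfcₙ (fun t : ℝ => max (t - ε) 0) c = cfcₙ (fun t : ℝ => max (t - ε) 0) c)
    (n : ℕ) (b : Matrix (Fin n) (Fin n) A)
    (hb : ∀ i j, b i j ∈ her (cfcₙ (fun t : ℝ => max (t - ε) 0) c))
    (x y : Fin n → A)
    (hxy : ∀ i, x i ∈ her (cfcₙ (fun t : ℝ => max (t - ε) 0) c) ∧
      y i ∈ her (cfcₙ (fun t : ℝ => max (t - ε) 0) c))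
    (hdiag : ∑ i, b i i = ∑ i, (x i * y i - y i * x i)) :
    ∃ x₁ y₁ x₂ y₂ : Matrix (Fin n) (Fin n) A,
      b = (x₁ * y₁ - y₁ * x₁) + (x₂ * y₂ - y₂ * x₂) := by
  have hS := her_subset_localUnitSubring (cfcₙ_predicate _ c) (.of_nonneg he_pos) he
  exact exists_eq_add_commutators ℂ (fun i j => hS (hb i j)) (fun i => hS (hxy i).1)
    (fun i => hS (hxy i).2) hdiag

/-- Let `c ∈ A₊`, `ε > 0`, and `e ∈ C*(c)₊` with `e(c−ε)₊ = (c−ε)₊`.  If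
`b ∈ Mₙ(her((c−ε)₊))` is such that `Σᵢ bᵢᵢ = Σᵢ [xᵢ, yᵢ]` with `xᵢ, yᵢ ∈ her((c−ε)₊)`,
then `b` is the sum of two commutators in `Mₙ(A)`. -/
theorem matrix_sum_two_commutators
    (c : A) (hc : 0 ≤ c) (ε : ℝ) (hε : 0 < ε)
    (e : A) (he_mem : e ∈ closure (NonUnitalStarAlgebra.adjoin ℂ {c} : Set A))
    (he_pos : 0 ≤ e)
    (he : e * cfcₙ (fun t : ℝ => max (t - ε) 0) c = cfcₙ (fun t : ℝ => max (t - ε) 0) c)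
    (n : ℕ) (b : Matrix (Fin n) (Fin n) A)
    (hb : ∀ i j, b i j ∈ her (cfcₙ (fun t : ℝ => max (t - ε) 0) c))
    (x y : Fin n → A)
    (hxy : ∀ i, x i ∈ her (cfcₙ (fun t : ℝ => max (t - ε) 0) c) ∧
      y i ∈ her (cfcₙ (fun t : ℝ => max (t - ε) 0) c))
    (hdiag : ∑ i, b i i = ∑ i, (x i * y i - y i * x i)) :
    ∃ x₁ y₁ x₂ y₂ : Matrix (Fin n) (Fin n) A,
      b = (x₁ * y₁ - y₁ * x₁) + (x₂ * y₂ - y₂ * x₂) :=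
  matrix_sum_two_commutators_general c ε e he_pos he n b hb x y hxy hdiag
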